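/- In the free associative algebra on generators Z₁, Z₁₁, Z₂, Z₂₂, Z₁₂ modulo the two-sided ideal generated by [Z₁,Z₂], [Z₁,Z₂₂], [Z₁₁,Z₂], [Z₁₁,Z₂₂]+[Z₁₁,Z₁₂], [Z₁₁,Z₂₂]+[Z₁₂,Z₂₂], [Z₁₁,Z₂₂]+[Z₁−Z₂,Z₁₂], the multiplication map gives a linear isomorphism U(𝔛^{(1)}) ⊗ U(𝔛^{(2)}) ≅ U(𝔛), where 𝔛^{(1)} is the free Lie subalgebra on Z₁,Z₁₁,Z₁₂ and 𝔛^{(2)} the free Lie subalgebra on Z₂,Z₂₂; equivalently, the products W₁W₂ of a word W₁ in {Z₁,Z₁₁,Z₁₂} and a word W₂ in {Z₂,Z₂₂} form a basis of U(𝔛). -/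

import Mathlib

/-!
Spanning: in `U(𝔛)` the commutator of `Z₂` or `Z₂₂` with any of `Z₁, Z₁₁, Z₁₂` is a polynomial in
`Z₁, Z₁₁, Z₁₂`, so every monomial can be reordered until the letters `Z₂, Z₂₂` stand on the right.

Independence: let `U₁, U₂` be the free algebras on `Z₁, Z₁₁, Z₁₂` and on `Z₂, Z₂₂`. On `U₁ ⊗ U₂`,
let `Z₁, Z₁₁, Z₁₂` act by left multiplication on `U₁`, and `Z₂, Z₂₂` by `D ⊗ 1 + 1 ⊗ Z`, where `D`
is the derivation of `U₁` extending the brackets with `Z₂, Z₂₂` read off from the relations. Since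
every relation only involves such brackets, this is a representation of `U(𝔛)`, and it sends
`W₁W₂` applied to `1 ⊗ 1` to `W₁ ⊗ W₂`; these form a basis of `U₁ ⊗ U₂`.
-/

namespace Stmt19

/-- The free associative `ℂ`-algebra on the generators `Z₁, Z₁₁, Z₂, Z₂₂, Z₁₂`
(indexed by `0, 1, 2, 3, 4`). -/
abbrev F5 := FreeAlgebra ℂ (Fin 5)

/-- The generators. -/
noncomputable def X5 (i : Fin 5) : F5 := FreeAlgebra.ι ℂ i

/-- Commutator in the associative algebra. -/
noncomputable def br (a b : F5) : F5 := a * b - b * a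

/-- The defining relations (each relator set to `0`):
`[Z₁,Z₂]`, `[Z₁,Z₂₂]`, `[Z₁₁,Z₂]`, `[Z₁₁,Z₂₂]+[Z₁₁,Z₁₂]`, `[Z₁₁,Z₂₂]+[Z₁₂,Z₂₂]`,
`[Z₁₁,Z₂₂]+[Z₁−Z₂,Z₁₂]`, where `(Z₁,Z₁₁,Z₂,Z₂₂,Z₁₂) = (X5 0, X5 1, X5 2, X5 3, X5 4)`. -/
inductive KZRel : F5 → F5 → Prop
  | r1 : KZRel (br (X5 0) (X5 2)) 0
  | r2 : KZRel (br (X5 0) (X5 3)) 0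
  | r3 : KZRel (br (X5 1) (X5 2)) 0
  | r4 : KZRel (br (X5 1) (X5 3) + br (X5 1) (X5 4)) 0
  | r5 : KZRel (br (X5 1) (X5 3) + br (X5 4) (X5 3)) 0
  | r6 : KZRel (br (X5 1) (X5 3) + br (X5 0 - X5 2) (X5 4)) 0

/-- The quotient `U(𝔛)` of the free algebra by the two-sided ideal generated by the
relations; this is the universal enveloping algebra of the Lie algebra `𝔛`. -/
abbrev UA := RingQuot KZRel

/-- The quotient map. -/
noncomputable def π5 : F5 →ₐ[ℂ] UA := RingQuot.mkAlgHom ℂ KZRel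

/-- The generators `Z₁, Z₁₁, Z₁₂` of `𝔛^{(1)}` inside `U(𝔛)`. -/
noncomputable def g1 : Fin 3 → UA := ![π5 (X5 0), π5 (X5 1), π5 (X5 4)]

/-- The generators `Z₂, Z₂₂` of `𝔛^{(2)}` inside `U(𝔛)`. -/
noncomputable def g2 : Fin 2 → UA := ![π5 (X5 2), π5 (X5 3)]

/-- The family of products `W₁·W₂` of a word `W₁` in `{Z₁,Z₁₁,Z₁₂}` and a word
`W₂` in `{Z₂,Z₂₂}`. -/
noncomputable def wordProd : List (Fin 3) × List (Fin 2) → UA :=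
  fun p => (p.1.map g1).prod * (p.2.map g2).prod


end Stmt19

open TensorProduct

noncomputable section

namespace Submodule

variable {R U : Type*} [CommSemiring R] [Semiring U] [Algebra R U]

def leftStabilizer (p : Submodule R U) : Subalgebra R U where
  carrier := {x | p ≤ p.comap (LinearMap.mulLeft R x)}
  mul_mem' {x y} hx hy z hz := by
    simpa only [mem_comap, LinearMap.mulLeft_apply, mul_assoc] using hx (hy hz)
  add_mem' {x y} hx hy z hz := by
    simpa only [mem_comap, LinearMap.mulLeft_apply, add_mul] using
      add_mem (mem_comap.1 (hx hz)) (mem_comap.1 (hy hz))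
  algebraMap_mem' r z hz := by
    simpa only [mem_comap, LinearMap.mulLeft_apply, ← Algebra.smul_def] using p.smul_mem r hz

theorem mem_leftStabilizer {p : Submodule R U} {x : U} :
    x ∈ p.leftStabilizer ↔ ∀ y ∈ p, x * y ∈ p :=
  Iff.rfl

theorem mem_leftStabilizer_span {s : Set U} {x : U} :
    x ∈ (span R s).leftStabilizer ↔ ∀ y ∈ s, x * y ∈ span R s :=
  span_le

end Submodule

theorem Submodule.span_list_prod_mul_list_prod_eq_top {R U ι κ : Type*} [CommSemiring R] [Ring U]
    [Algebra R U] (a : ι → U) (b : κ → U)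
    (hgen : Algebra.adjoin R (Set.range a ∪ Set.range b) = ⊤)
    (hcomm : ∀ j i, b j * a i - a i * b j ∈ Algebra.adjoin R (Set.range a)) :
    span R (Set.range fun p : List ι × List κ => (p.1.map a).prod * (p.2.map b).prod) = ⊤ := by
  set S := span R (Set.range fun p : List ι × List κ => (p.1.map a).prod * (p.2.map b).prod)
  have word_mem (l₁ : List ι) (l₂ : List κ) : (l₁.map a).prod * (l₂.map b).prod ∈ S :=
    subset_span ⟨(l₁, l₂), rfl⟩
  have a_mem (i : ι) : a i ∈ S.leftStabilizer := by
    rw [mem_leftStabilizer_span]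
    rintro _ ⟨⟨l₁, l₂⟩, rfl⟩
    simpa only [List.map_cons, List.prod_cons, mul_assoc] using word_mem (i :: l₁) l₂
  have adjoin_a_le : Algebra.adjoin R (Set.range a) ≤ S.leftStabilizer :=
    Algebra.adjoin_le (Set.range_subset_iff.2 a_mem)
  have b_mem (j : κ) : b j ∈ S.leftStabilizer := by
    rw [mem_leftStabilizer_span]
    rintro _ ⟨⟨l₁, l₂⟩, rfl⟩
    change b j * ((l₁.map a).prod * (l₂.map b).prod) ∈ S
    induction l₁ with
    | nil => simpa using word_mem [] (j :: l₂)
    | cons i t ih =>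
      have swap : b j * a i = a i * b j + (b j * a i - a i * b j) := by abel
      rw [List.map_cons, List.prod_cons, mul_assoc, ← mul_assoc, swap, add_mul, mul_assoc]
      exact add_mem (mem_leftStabilizer.1 (a_mem i) _ ih)
        (mem_leftStabilizer.1 (adjoin_a_le (hcomm j i)) _ (word_mem t l₂))
  have top_le : ⊤ ≤ S.leftStabilizer := by
    rw [← hgen]
    exact Algebra.adjoin_le (Set.union_subset (Set.range_subset_iff.2 a_mem)
      (Set.range_subset_iff.2 b_mem))
  refine eq_top_iff'.2 fun x => ?_
  simpa using mem_leftStabilizer.1 (top_le Algebra.mem_top) _ (word_mem [] [])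

namespace FreeAlgebra

variable {R X : Type*} [CommSemiring R]

theorem basisFreeMonoid_ofList (l : List X) :
    basisFreeMonoid R X (FreeMonoid.ofList l) = (l.map (ι R)).prod := by
  simp [basisFreeMonoid, equivMonoidAlgebraFreeMonoid]

theorem linearIndependent_list_prod_tmul_list_prod {Y : Type*} :
    LinearIndependent R fun p : List X × List Y =>
      (p.1.map (ι R)).prod ⊗ₜ[R] (p.2.map (ι R)).prod := by
  have hinj :
      Function.Injective (Prod.map (FreeMonoid.ofList (α := X)) (FreeMonoid.ofList (α := Y))) :=
    FreeMonoid.ofList.injective.prodMap FreeMonoid.ofList.injective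
  convert ((basisFreeMonoid R X).tensorProduct (basisFreeMonoid R Y)).linearIndependent.comp _
    hinj using 1
  · funext ⟨l₁, l₂⟩
    rw [Function.comp_apply, Prod.map_apply, Module.Basis.tensorProduct_apply,
      basisFreeMonoid_ofList, basisFreeMonoid_ofList]
  · rfl

variable (δ : X → FreeAlgebra R X)

def liftTrivSqZeroExt : FreeAlgebra R X →ₐ[R] TrivSqZeroExt (FreeAlgebra R X) (FreeAlgebra R X) :=
  lift R fun x => TrivSqZeroExt.inl (ι R x) + TrivSqZeroExt.inr (δ x)

theorem fst_liftTrivSqZeroExt (u : FreeAlgebra R X) : (liftTrivSqZeroExt δ u).fst = u := by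
  have : (TrivSqZeroExt.fstHom R _ _).comp (liftTrivSqZeroExt δ) = AlgHom.id R _ :=
    hom_ext (funext fun x => by simp [liftTrivSqZeroExt])
  exact DFunLike.congr_fun this u

-- `Derivation` requires a commutative algebra, so this is the derivation with values `δ` on the
-- generators, built by hand.
def derivationLift : FreeAlgebra R X →ₗ[R] FreeAlgebra R X :=
  (TrivSqZeroExt.sndHom (FreeAlgebra R X) (FreeAlgebra R X)).restrictScalars R ∘ₗ
    (liftTrivSqZeroExt δ).toLinearMap

theorem derivationLift_apply (u : FreeAlgebra R X) :
    derivationLift δ u = (liftTrivSqZeroExt δ u).snd :=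
  rfl

@[simp]
theorem derivationLift_ι (x : X) : derivationLift δ (ι R x) = δ x := by
  simp [derivationLift_apply, liftTrivSqZeroExt]

@[simp]
theorem derivationLift_one : derivationLift δ 1 = 0 := by
  simp [derivationLift_apply]

theorem derivationLift_mul (u v : FreeAlgebra R X) :
    derivationLift δ (u * v) = u * derivationLift δ v + derivationLift δ u * v := by
  simp only [derivationLift_apply, map_mul, TrivSqZeroExt.snd_mul, fst_liftTrivSqZeroExt,
    smul_eq_mul, op_smul_eq_mul]

end FreeAlgebra

namespace LinearMap

variable {R A B : Type*} [CommSemiring R] [Semiring A] [Algebra R A] [AddCommMonoid B] [Module R B]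

theorem rTensor_add_lTensor_mul_rTensor_lmul (D : A →ₗ[R] A)
    (hD : ∀ u v, D (u * v) = u * D v + D u * v)
    (f : Module.End R B) (u : A) :
    (D.rTensor B + f.lTensor A) * (Algebra.lmul R A u).rTensor B
      = (Algebra.lmul R A u).rTensor B * (D.rTensor B + f.lTensor A)
        + (Algebra.lmul R A (D u)).rTensor B := by
  have hDu : D * Algebra.lmul R A u = Algebra.lmul R A u * D + Algebra.lmul R A (D u) := by
    ext v; simp [hD]
  have hcomm : f.lTensor A * (Algebra.lmul R A u).rTensor B
      = (Algebra.lmul R A u).rTensor B * f.lTensor A := by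
    rw [Module.End.mul_eq_comp, Module.End.mul_eq_comp, lTensor_comp_rTensor,
      rTensor_comp_lTensor]
  rw [add_mul, mul_add, hcomm, ← rTensor_mul, hDu, rTensor_add, rTensor_mul]
  abel

end LinearMap

end

namespace Stmt19

open FreeAlgebra

noncomputable section

-- `U(𝔛^{(1)})` and `U(𝔛^{(2)})`, which are free.
abbrev U1 := FreeAlgebra ℂ (Fin 3)

abbrev U2 := FreeAlgebra ℂ (Fin 2)

/-- `[Z₂, ·]` and `[Z₂₂, ·]` on `Z₁, Z₁₁, Z₁₂`, solved from the relations: e.g. `r4` gives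
`[Z₂₂, Z₁₁] = [Z₁₁, Z₁₂]`, and `r6 - r4` gives `[Z₂, Z₁₂] = [Z₁, Z₁₂] - [Z₁₁, Z₁₂]`. -/
def adX2 : Fin 2 → Fin 3 → U1 :=
  ![![0, 0, ι ℂ 0 * ι ℂ 2 - ι ℂ 2 * ι ℂ 0 - (ι ℂ 1 * ι ℂ 2 - ι ℂ 2 * ι ℂ 1)],
    ![0, ι ℂ 1 * ι ℂ 2 - ι ℂ 2 * ι ℂ 1, ι ℂ 2 * ι ℂ 1 - ι ℂ 1 * ι ℂ 2]]

def actX1 : U1 →ₐ[ℂ] Module.End ℂ (U1 ⊗[ℂ] U2) :=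
  (Module.End.rTensorAlgHom ℂ U1 U2).comp (Algebra.lmul ℂ U1)

def actX2 (j : Fin 2) : Module.End ℂ (U1 ⊗[ℂ] U2) :=
  (derivationLift (adX2 j)).rTensor U2 + (Algebra.lmul ℂ U2 (ι ℂ j)).lTensor U1

theorem actX2_mul_actX1 (j : Fin 2) (u : U1) :
    actX2 j * actX1 u = actX1 u * actX2 j + actX1 (derivationLift (adX2 j) u) :=
  LinearMap.rTensor_add_lTensor_mul_rTensor_lmul _ (derivationLift_mul _) _ u

theorem actX1_tmul (u w : U1) (v : U2) : actX1 u (w ⊗ₜ v) = (u * w) ⊗ₜ v :=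
  rfl

theorem actX2_one_tmul (j : Fin 2) (v : U2) :
    actX2 j ((1 : U1) ⊗ₜ v) = (1 : U1) ⊗ₜ (ι ℂ j * v) := by
  simp [actX2]

def repGen : Fin 5 → Module.End ℂ (U1 ⊗[ℂ] U2) :=
  ![actX1 (ι ℂ 0), actX1 (ι ℂ 1), actX2 0, actX2 1, actX1 (ι ℂ 2)]

theorem lift_repGen_eq_of_kzRel ⦃x y : F5⦄ (h : KZRel x y) :
    lift ℂ repGen x = lift ℂ repGen y := by
  cases h <;>
  · simp only [br, X5, repGen, map_sub, map_add, map_mul, map_zero, lift_ι_apply, sub_mul, mul_sub,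
      Matrix.cons_val_zero, Matrix.cons_val_one, Matrix.cons_val_two, Matrix.cons_val_three,
      Matrix.cons_val_four, Matrix.head_cons, Matrix.tail_cons]
    simp only [actX2_mul_actX1, derivationLift_ι, adX2, map_sub, map_mul,
      map_zero, Matrix.cons_val_zero, Matrix.cons_val_one, Matrix.cons_val_two, Matrix.head_cons,
      Matrix.tail_cons]
    noncomm_ring

def rep : UA →ₐ[ℂ] Module.End ℂ (U1 ⊗[ℂ] U2) :=
  RingQuot.liftAlgHom ℂ ⟨lift ℂ repGen, lift_repGen_eq_of_kzRel⟩

theorem rep_π5_X5 (i : Fin 5) : rep (π5 (X5 i)) = repGen i := by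
  simp [rep, π5, X5]

theorem rep_wordProd_one_tmul_one (l₁ : List (Fin 3)) (l₂ : List (Fin 2)) :
    rep (wordProd (l₁, l₂)) ((1 : U1) ⊗ₜ (1 : U2))
      = (l₁.map (ι ℂ)).prod ⊗ₜ (l₂.map (ι ℂ)).prod := by
  have rep_g1 : rep ∘ g1 = actX1 ∘ ι ℂ := by
    funext i; fin_cases i <;> exact rep_π5_X5 _
  have rep_g2 : rep ∘ g2 = actX2 := by
    funext j; fin_cases j <;> exact rep_π5_X5 _
  have vacuum_l₂ :
      rep (l₂.map g2).prod ((1 : U1) ⊗ₜ (1 : U2)) = (1 : U1) ⊗ₜ (l₂.map (ι ℂ)).prod := by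
    induction l₂ with
    | nil => simp
    | cons j t ih =>
      rw [List.map_cons, List.prod_cons, map_mul, Module.End.mul_apply, ih,
        ← Function.comp_apply (f := rep), rep_g2, actX2_one_tmul]
      simp
  rw [wordProd, map_mul, Module.End.mul_apply, vacuum_l₂, map_list_prod, List.map_map, rep_g1,
    ← List.map_map, ← map_list_prod, actX1_tmul, mul_one]

theorem linearIndependent_wordProd : LinearIndependent ℂ wordProd := by
  refine .of_comp (LinearMap.applyₗ ((1 : U1) ⊗ₜ (1 : U2)) ∘ₗ rep.toLinearMap) ?_
  have : (LinearMap.applyₗ ((1 : U1) ⊗ₜ (1 : U2)) ∘ₗ rep.toLinearMap) ∘ wordProd =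
      fun p => (p.1.map (ι ℂ)).prod ⊗ₜ[ℂ] (p.2.map (ι ℂ)).prod :=
    funext fun p => rep_wordProd_one_tmul_one p.1 p.2
  rw [this]
  exact linearIndependent_list_prod_tmul_list_prod

theorem adjoin_range_g1_union_range_g2 : Algebra.adjoin ℂ (Set.range g1 ∪ Set.range g2) = ⊤ := by
  have gens_le : π5 '' Set.range (ι ℂ) ⊆ Set.range g1 ∪ Set.range g2 := by
    rintro _ ⟨_, ⟨i, rfl⟩, rfl⟩
    fin_cases i
    exacts [.inl ⟨0, rfl⟩, .inl ⟨1, rfl⟩, .inr ⟨0, rfl⟩, .inr ⟨1, rfl⟩, .inl ⟨2, rfl⟩]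
  refine eq_top_mono (Algebra.adjoin_mono gens_le) ?_
  rw [Algebra.adjoin_image, adjoin_range_ι, Algebra.map_top, AlgHom.range_eq_top]
  exact RingQuot.mkAlgHom_surjective ℂ KZRel

theorem π5_eq_zero_of_kzRel {x : F5} (h : KZRel x 0) : π5 x = 0 := by
  simpa [π5] using RingQuot.mkAlgHom_rel ℂ h

theorem g2_mul_g1_sub_g1_mul_g2 (j : Fin 2) (i : Fin 3) :
    g2 j * g1 i - g1 i * g2 j = lift ℂ g1 (adX2 j i) := by
  have r1 := π5_eq_zero_of_kzRel .r1
  have r2 := π5_eq_zero_of_kzRel .r2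
  have r3 := π5_eq_zero_of_kzRel .r3
  have r4 := π5_eq_zero_of_kzRel .r4
  have r5 := π5_eq_zero_of_kzRel .r5
  have r6 := π5_eq_zero_of_kzRel .r6
  simp only [br, map_add, map_sub, map_mul, sub_mul, mul_sub] at r1 r2 r3 r4 r5 r6
  fin_cases j <;> fin_cases i <;>
    simp only [g1, g2, adX2, Fin.isValue, Fin.zero_eta, Fin.mk_one, Fin.reduceFinMk,
      Matrix.cons_val_zero, Matrix.cons_val_one, Matrix.cons_val, Matrix.cons_val',
      Matrix.cons_val_fin_one, map_zero, map_sub, map_mul, lift_ι_apply]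
  · linear_combination (norm := noncomm_ring) -r1
  · linear_combination (norm := noncomm_ring) -r3
  · linear_combination (norm := noncomm_ring) r4 - r6
  · linear_combination (norm := noncomm_ring) -r2
  · linear_combination (norm := noncomm_ring) -r4
  · linear_combination (norm := noncomm_ring) r4 - r5

theorem span_range_wordProd : Submodule.span ℂ (Set.range wordProd) = ⊤ :=
  Submodule.span_list_prod_mul_list_prod_eq_top g1 g2 adjoin_range_g1_union_range_g2 fun j i => by
    rw [g2_mul_g1_sub_g1_mul_g2, Algebra.adjoin_range_eq_range_freeAlgebra_lift]
    exact ⟨adX2 j i, rfl⟩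

/-- the products `W₁W₂` form a basis of `U(𝔛)`; equivalently the
multiplication map gives a linear isomorphism `U(𝔛^{(1)}) ⊗ U(𝔛^{(2)}) ≅ U(𝔛)`. -/
theorem tensor_decomposition :
    LinearIndependent ℂ wordProd ∧ Submodule.span ℂ (Set.range wordProd) = ⊤ :=
  ⟨linearIndependent_wordProd, span_range_wordProd⟩

end

end Stmt19
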